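/- For all y ∈ ℝ² the inequality f_a(y) ≤ f^(r₀)(y) holds, where f^(r₀) is the condensed energy associated with the admissible dissipation function r₀. -/
import Mathlib


/-- The condensed energy `f^(r)` associated with the dissipation function `r`
and the hardening parameter `b`. -/
noncomputable def condensed (b : ℝ) (r : ℝ → ℝ) (y : ℝ × ℝ) : ℝ :=
  (1 / 2) * (y.1 ^ 2 + y.2 ^ 2) - (max (|y.2| - r y.1) 0) ^ 2 / (2 * (b + 1))

/-- The piecewise affine dissipation function `r₀`. -/
noncomputable def r0 (b ymin ymax : ℝ) (t : ℝ) : ℝ :=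
  if t ∈ Set.Icc ymin ymax then
    Real.sqrt b * ((ymax - ymin) / 2 - |t - (ymin + ymax) / 2|)
  else 0

/-- The candidate `f_a` for the convex envelope of the condensed energy. -/
noncomputable def fa (b ymin ymax : ℝ) (y : ℝ × ℝ) : ℝ :=
  if y.1 ≤ ymin ∨ ymax ≤ y.1 then
    (1 / 2) * y.1 ^ 2 + (b / (2 * (b + 1))) * y.2 ^ 2
  else if |y.2| < r0 b ymin ymax y.1 then
    (1 / 2) * (y.1 ^ 2 + y.2 ^ 2)
  else if |y.2| < ((b + 1) / Real.sqrt b) * ((ymax - ymin) / 2) - r0 b ymin ymax y.1 / b then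
    (1 / 2) * (y.1 ^ 2 + y.2 ^ 2) - (|y.2| - r0 b ymin ymax y.1) ^ 2 / (2 * (b + 1))
  else if |y.2| ≤ ((b + 1) / Real.sqrt b) * ((ymax - ymin) / 2) then
    (1 / 2) * (y.1 ^ 2 + y.2 ^ 2) - (|y.2| - r0 b ymin ymax y.1) ^ 2 / (2 * (b + 1))
      - (b / (2 * (b + 1))) *
        (|y.2| - ((b + 1) / Real.sqrt b) * ((ymax - ymin) / 2) + r0 b ymin ymax y.1 / b) ^ 2
  else
    (1 / 2) * y.1 ^ 2 + (b / (2 * (b + 1))) * y.2 ^ 2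
      + (1 / 2) * (y.1 - ymin) * (ymax - y.1)

theorem stmt_5 (b ymin ymax : ℝ) (hb : 0 < b) (hy : ymin < ymax) :
    ∀ y : ℝ × ℝ, fa b ymin ymax y ≤ condensed b (r0 b ymin ymax) y := by
  rintro ⟨y1, y2⟩
  have hsb : 0 < Real.sqrt b := Real.sqrt_pos.mpr hb
  have hsb2 : Real.sqrt b ^ 2 = b := Real.sq_sqrt hb.le
  have hB : (0:ℝ) < 2 * (b + 1) := by linarith
  have ha0 : 0 ≤ |y2| := abs_nonneg _
  have ha2 : |y2| ^ 2 = y2 ^ 2 := sq_abs _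
  simp only [fa, condensed]
  by_cases h1 : y1 ≤ ymin ∨ ymax ≤ y1
  · rw [if_pos h1]
    have hr : r0 b ymin ymax y1 = 0 := by
      unfold r0
      split
      · rename_i hmem
        rcases h1 with h | h
        · have hy1 : y1 = ymin := le_antisymm h hmem.1
          have : |y1 - (ymin + ymax) / 2| = (ymax - ymin) / 2 := by
            rw [hy1, abs_of_nonpos (by linarith)]; ring
          rw [this]; ring
        · have hy1 : y1 = ymax := le_antisymm hmem.2 h
          have : |y1 - (ymin + ymax) / 2| = (ymax - ymin) / 2 := by
            rw [hy1, abs_of_nonneg (by linarith)]; ring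
          rw [this]; ring
      · rfl
    rw [hr, sub_zero, max_eq_left ha0]
    have : (1/2:ℝ) * (y1 ^ 2 + y2 ^ 2) - |y2| ^ 2 / (2 * (b + 1)) =
        1/2 * y1 ^ 2 + b / (2 * (b + 1)) * y2 ^ 2 := by
      rw [ha2]; field_simp; ring
    rw [this]
  · rw [if_neg h1]
    push_neg at h1
    obtain ⟨h1a, h1b⟩ := h1
    set s := (ymax - ymin) / 2 with hs
    set d := |y1 - (ymin + ymax) / 2| with hd
    have hds : d < s := by
      rw [hd, abs_lt]; constructor <;> [skip; skip] <;> simp [hs] <;> linarith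
    have hd0 : 0 ≤ d := abs_nonneg _
    have hr : r0 b ymin ymax y1 = Real.sqrt b * (s - d) := by
      unfold r0
      rw [if_pos ⟨h1a.le, h1b.le⟩]
    set r := r0 b ymin ymax y1 with hrdef
    have hr0 : 0 ≤ r := by
      rw [hr]; exact mul_nonneg hsb.le (by linarith)
    by_cases h2 : |y2| < r
    · rw [if_pos h2]
      have : max (|y2| - r) 0 = 0 := max_eq_right (by linarith)
      rw [this]
      have : (0:ℝ) ^ 2 / (2 * (b + 1)) = 0 := by simp
      rw [this, sub_zero]
    · rw [if_neg h2]
      push_neg at h2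
      have hmax : max (|y2| - r) 0 = |y2| - r := max_eq_left (by linarith)
      rw [hmax]
      by_cases h3 : |y2| < (b + 1) / Real.sqrt b * s - r / b
      · rw [if_pos h3]
      · rw [if_neg h3]
        push_neg at h3
        by_cases h4 : |y2| ≤ (b + 1) / Real.sqrt b * s
        · rw [if_pos h4]
          have hnn : 0 ≤ b / (2 * (b + 1)) *
              (|y2| - (b + 1) / Real.sqrt b * s + r / b) ^ 2 :=
            mul_nonneg (div_nonneg hb.le hB.le) (sq_nonneg _)
          linarith
        · rw [if_neg h4]
          push_neg at h4
          have key : Real.sqrt b * |y2| > (b + 1) * s := by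
            have := mul_lt_mul_of_pos_left h4 hsb
            have heq : Real.sqrt b * ((b + 1) / Real.sqrt b * s) = (b + 1) * s := by
              field_simp
            linarith [heq ▸ this]
          rw [← sub_nonneg, ← ha2]
          have heq : ∀ a : ℝ, (1/2:ℝ) * (y1 ^ 2 + a ^ 2) - (a - r) ^ 2 / (2 * (b + 1)) -
              (1/2 * y1 ^ 2 + b / (2 * (b + 1)) * a ^ 2 + 1/2 * (y1 - ymin) * (ymax - y1)) =
              (2 * a * r - r ^ 2 - (b + 1) * ((y1 - ymin) * (ymax - y1))) / (2 * (b + 1)) := by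
            intro a; field_simp; ring
          rw [heq |y2|]
          apply div_nonneg _ hB.le
          have hprod : (y1 - ymin) * (ymax - y1) = s ^ 2 - d ^ 2 := by
            rw [hd, sq_abs, hs]; ring
          rw [hprod, hr, mul_pow, hsb2]
          have hfac : 0 ≤ (s - d) * (2 * Real.sqrt b * |y2| - (2 * b + 1) * s - d) :=
            mul_nonneg (by linarith) (by linarith)
          nlinarith [hfac]
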